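/- arXiv:1308.3408 — 4 statements merged into one kernel-verified Lean document; each statement's English description precedes it below -/
import Mathlib

section
/- Let G_1 and G_2 be finite groups, let K_1 ≤ Z(G_1) and K_2 ≤ Z(G_2) be central subgroups, and let θ : G_1 → G_2 be a group homomorphism whose restriction θ|_{K_1} : K_1 → K_2 is an isomorphism onto K_2. Let E = G_1 × G_2, let N = {(a, θ(a)⁻¹) : a ∈ K_1} (a central subgroup of E), and let G = E/N. If B_0(G_1/K_1) = 0, B_0(G_1) = 0 and B_0(G_2) = 0, then B_0(G) = 0. -/
open Matrix

/-! ### The group `ℚ/ℤ` and the Bogomolov multiplier -/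

/-- The group `ℚ/ℤ`. -/
abbrev QmodZ : Type := AddCircle (1 : ℚ)

/-- A `2`-cocycle on `G` with values in `ℚ/ℤ` (trivial `G`-action). -/
def IsTwoCocycle {G : Type*} [Group G] (f : G → G → QmodZ) : Prop :=
  ∀ g h k : G, f g h + f (g * h) k = f g (h * k) + f h k

/-- A `2`-coboundary on `G` with values in `ℚ/ℤ` (trivial `G`-action). -/
def IsTwoCoboundary {G : Type*} [Group G] (f : G → G → QmodZ) : Prop :=
  ∃ φ : G → QmodZ, ∀ g h : G, f g h = φ g + φ h - φ (g * h)

/-- A group is bicyclic if it is either cyclic or a direct product of two cyclic groups. -/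
def IsBicyclic (A : Type u) [Group A] : Prop :=
  IsCyclic A ∨ ∃ (B C : Type u) (gB : Group B) (gC : Group C),
    letI := gB
    letI := gC
    IsCyclic B ∧ IsCyclic C ∧ Nonempty (A ≃* (B × C))

/-- `B₀(G) = 0`: every class in `H²(G, ℚ/ℤ)` (with trivial action), i.e. every 2-cocycle
modulo 2-coboundaries, whose restriction to every bicyclic subgroup `A ≤ G` vanishes
(i.e. becomes a coboundary on `A`), is itself zero (i.e. is a coboundary on `G`).
This says exactly that the Bogomolov multiplier
`B₀(G) = ⋂_A ker (res : H²(G,ℚ/ℤ) → H²(A,ℚ/ℤ))` is trivial. -/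
def BogomolovMultiplierTrivial (G : Type u) [Group G] : Prop :=
  ∀ f : G → G → QmodZ, IsTwoCocycle f →
    (∀ A : Subgroup G, IsBicyclic ↥A →
      IsTwoCoboundary (fun a b : ↥A => f ↑a ↑b)) →
    IsTwoCoboundary f

/-! ### Unitriangular groups -/

/-- The predicate on `n × n` matrices over `F_p` defining `UT_n^ℓ(F_p)`:
the matrix is upper unitriangular (all diagonal entries are `1`, all entries below the
diagonal are `0`) and moreover the first `ℓ - 1` diagonals above the main diagonal vanish,
i.e. `A i j = 0` whenever `j < i` or `0 < j - i < ℓ`. -/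
def UTP (n p ℓ : ℕ) (A : Matrix (Fin n) (Fin n) (ZMod p)) : Prop :=
  (∀ i, A i i = 1) ∧
    ∀ i j : Fin n, ((j : ℕ) < (i : ℕ) ∨ ((i : ℕ) < (j : ℕ) ∧ (j : ℕ) - (i : ℕ) < ℓ)) →
      A i j = 0

lemma UTP.one (n p ℓ : ℕ) : UTP n p ℓ (1 : Matrix (Fin n) (Fin n) (ZMod p)) := by
  constructor
  · intro i; exact Matrix.one_apply_eq i
  · intro i j h
    have hne : i ≠ j := by
      rintro rfl; omega
    exact Matrix.one_apply_ne hne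

lemma UTP.mul {n p ℓ : ℕ} {A B : Matrix (Fin n) (Fin n) (ZMod p)}
    (hA : UTP n p ℓ A) (hB : UTP n p ℓ B) : UTP n p ℓ (A * B) := by
  constructor
  · intro i
    rw [Matrix.mul_apply, Finset.sum_eq_single i]
    · rw [hA.1, hB.1, one_mul]
    · intro k _ hk
      have hk' : (k : ℕ) ≠ (i : ℕ) := fun h => hk (Fin.ext h)
      rcases Nat.lt_or_ge (k : ℕ) (i : ℕ) with h | h
      · rw [hA.2 i k (Or.inl h), zero_mul]
      · have h' : (i : ℕ) < (k : ℕ) := by omega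
        rw [hB.2 k i (Or.inl h'), mul_zero]
    · intro h; exact absurd (Finset.mem_univ i) h
  · intro i j hij
    rw [Matrix.mul_apply]
    apply Finset.sum_eq_zero
    intro k _
    by_cases h1 : (k : ℕ) < (i : ℕ) ∨ ((i : ℕ) < (k : ℕ) ∧ (k : ℕ) - (i : ℕ) < ℓ)
    · rw [hA.2 i k h1, zero_mul]
    by_cases h2 : (j : ℕ) < (k : ℕ) ∨ ((k : ℕ) < (j : ℕ) ∧ (j : ℕ) - (k : ℕ) < ℓ)
    · rw [hB.2 k j h2, mul_zero]
    exfalso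
    push_neg at h1 h2
    omega

lemma UTP.pow {n p ℓ : ℕ} {A : Matrix (Fin n) (Fin n) (ZMod p)}
    (hA : UTP n p ℓ A) (m : ℕ) : UTP n p ℓ (A ^ m) := by
  induction m with
  | zero => simpa using UTP.one n p ℓ
  | succ m ih => rw [pow_succ]; exact ih.mul hA

/-- `UT_n^ℓ(F_p)`: the subgroup of `UT_n(F_p)` consisting of all unitriangular matrices
whose first `ℓ - 1` diagonals above the main diagonal are zero (i.e. `A i j = 0`
whenever `0 < j - i < ℓ`), realized as a subgroup of the units of the matrix ring. -/
def UTd (n p ℓ : ℕ) [Fact p.Prime] : Subgroup (Matrix (Fin n) (Fin n) (ZMod p))ˣ where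
  carrier := {x | UTP n p ℓ (x : Matrix (Fin n) (Fin n) (ZMod p))}
  one_mem' := by
    show UTP n p ℓ ((1 : (Matrix (Fin n) (Fin n) (ZMod p))ˣ) : Matrix (Fin n) (Fin n) (ZMod p))
    rw [Units.val_one]; exact UTP.one n p ℓ
  mul_mem' := by
    intro a b ha hb
    show UTP n p ℓ ((a * b : (Matrix (Fin n) (Fin n) (ZMod p))ˣ) : Matrix (Fin n) (Fin n) (ZMod p))
    rw [Units.val_mul]
    exact UTP.mul ha hb
  inv_mem' := by
    intro x hx
    show UTP n p ℓ ((x⁻¹ : (Matrix (Fin n) (Fin n) (ZMod p))ˣ) : Matrix (Fin n) (Fin n) (ZMod p))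
    have hpos : 0 < orderOf x := orderOf_pos x
    have h1 : x ^ (orderOf x - 1) * x = 1 := by
      have := pow_orderOf_eq_one x
      rwa [← Nat.succ_pred_eq_of_pos hpos, pow_succ] at this
    have h2 : x⁻¹ = x ^ (orderOf x - 1) := inv_eq_of_mul_eq_one_left h1
    rw [h2, Units.val_pow_eq_pow_val]
    exact UTP.pow hx _

/-- `UT_n(F_p)`: the group of upper unitriangular `n × n` matrices over `F_p`
(all diagonal entries equal `1`, all entries below the diagonal equal `0`),
realized as a subgroup of the units of the matrix ring. -/
def UT (n p : ℕ) [Fact p.Prime] : Subgroup (Matrix (Fin n) (Fin n) (ZMod p))ˣ :=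
  (UTd n p 1).copy
    {x | (∀ i, (x : Matrix (Fin n) (Fin n) (ZMod p)) i i = 1) ∧
      ∀ i j : Fin n, (j : ℕ) < (i : ℕ) → (x : Matrix (Fin n) (Fin n) (ZMod p)) i j = 0}
    (by
      ext x
      constructor
      · rintro ⟨h1, h2⟩
        refine ⟨h1, fun i j h => ?_⟩
        rcases h with h | h
        · exact h2 i j h
        · omega
      · rintro ⟨h1, h2⟩
        exact ⟨h1, fun i j h => h2 i j (by omega)⟩)

/-! ### Elementary transvections -/

/-- The elementary transvection `1 + c·E_{ab}` (for `a ≠ b`) as a unit of the matrix ring. -/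
def tvUnit (n p : ℕ) [Fact p.Prime] (a b : Fin n) (hab : a ≠ b) (c : ZMod p) :
    (Matrix (Fin n) (Fin n) (ZMod p))ˣ where
  val := Matrix.transvection a b c
  inv := Matrix.transvection a b (-c)
  val_inv := by
    rw [Matrix.transvection_mul_transvection_same a b hab, add_neg_cancel]
    simp [Matrix.transvection]
  inv_val := by
    rw [Matrix.transvection_mul_transvection_same a b hab, neg_add_cancel]
    simp [Matrix.transvection]

lemma tvUnit_mem_UT (n p : ℕ) [Fact p.Prime] (a b : Fin n) (hab : (a : ℕ) < (b : ℕ))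
    (c : ZMod p) : tvUnit n p a b (Fin.ne_of_val_ne (Nat.ne_of_lt hab)) c ∈ UT n p := by
  constructor
  · intro i
    simp only [tvUnit, Matrix.transvection, Matrix.add_apply, Matrix.one_apply_eq,
      Matrix.single, Matrix.of_apply]
    have : ¬(a = i ∧ b = i) := by
      rintro ⟨rfl, rfl⟩; omega
    rw [if_neg this, add_zero]
  · intro i j hij
    have hne : i ≠ j := by rintro rfl; omega
    simp only [tvUnit, Matrix.transvection, Matrix.add_apply, Matrix.one_apply_ne hne,
      Matrix.single, Matrix.of_apply]
    have : ¬(a = i ∧ b = j) := by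
      rintro ⟨rfl, rfl⟩; omega
    rw [if_neg this, add_zero]

/-- The elementary transvection `t_{ij}(c) = 1 + c·E_{ij}` as an element of `UT_n(F_p)`.
Here `i, j` are 1-indexed (as in the paper): `1 ≤ i < j ≤ n`. -/
def tv (n p : ℕ) [Fact p.Prime] (i j : ℕ) (h1 : 1 ≤ i) (hij : i < j) (hjn : j ≤ n)
    (c : ZMod p) : ↥(UT n p) :=
  ⟨tvUnit n p ⟨i - 1, by omega⟩ ⟨j - 1, by omega⟩
      (Fin.ne_of_val_ne (by simp; omega)) c,
    tvUnit_mem_UT n p ⟨i - 1, by omega⟩ ⟨j - 1, by omega⟩ (by simp; omega) c⟩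

lemma tv_mul (n p : ℕ) [Fact p.Prime] (i j : ℕ) (h1 : 1 ≤ i) (hij : i < j) (hjn : j ≤ n)
    (c d : ZMod p) :
    tv n p i j h1 hij hjn c * tv n p i j h1 hij hjn d = tv n p i j h1 hij hjn (c + d) := by
  apply Subtype.ext
  apply Units.ext
  show Matrix.transvection _ _ c * Matrix.transvection _ _ d = Matrix.transvection _ _ (c + d)
  exact Matrix.transvection_mul_transvection_same _ _ (Fin.ne_of_val_ne (by simp; omega)) c d

lemma tv_zero (n p : ℕ) [Fact p.Prime] (i j : ℕ) (h1 : 1 ≤ i) (hij : i < j) (hjn : j ≤ n) :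
    tv n p i j h1 hij hjn 0 = 1 := by
  apply Subtype.ext
  apply Units.ext
  show Matrix.transvection _ _ (0 : ZMod p) = 1
  simp [Matrix.transvection]

lemma tv_inv (n p : ℕ) [Fact p.Prime] (i j : ℕ) (h1 : 1 ≤ i) (hij : i < j) (hjn : j ≤ n)
    (c : ZMod p) : (tv n p i j h1 hij hjn c)⁻¹ = tv n p i j h1 hij hjn (-c) := by
  refine inv_eq_of_mul_eq_one_right ?_
  rw [tv_mul, add_neg_cancel, tv_zero]

/-! ### The corner transvection is central -/

lemma ut_mul_stdBasis_comm {n p : ℕ} {A : Matrix (Fin n) (Fin n) (ZMod p)}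
    (hd : ∀ i, A i i = 1) (hl : ∀ i j : Fin n, (j : ℕ) < (i : ℕ) → A i j = 0)
    (f l : Fin n) (hf : (f : ℕ) = 0) (hlv : (l : ℕ) = n - 1) (hn : 2 ≤ n) (c : ZMod p) :
    A * Matrix.single f l c = Matrix.single f l c * A := by
  ext x y
  by_cases hy : y = l
  · subst hy
    rw [Matrix.mul_single_apply_same]
    by_cases hx : x = f
    · subst hx
      rw [Matrix.single_mul_apply_same, hd, hd, one_mul, mul_one]
    · have h1 : A x f = 0 := by
        apply hl
        have : (x : ℕ) ≠ (f : ℕ) := fun h => hx (Fin.ext h)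
        omega
      rw [h1, zero_mul, Matrix.single_mul_apply_of_ne _ _ _ _ _ hx, ]
  · rw [Matrix.mul_single_apply_of_ne _ _ _ _ _ hy]
    by_cases hx : x = f
    · subst hx
      rw [Matrix.single_mul_apply_same]
      have h1 : A l y = 0 := by
        apply hl
        have : (y : ℕ) ≠ (l : ℕ) := fun h => hy (Fin.ext h)
        have := y.isLt
        omega
      rw [h1, mul_zero]
    · rw [Matrix.single_mul_apply_of_ne _ _ _ _ _ hx]

/-- The corner transvection `t_{1,n}(c)` commutes with every element of `UT_n(F_p)`. -/
lemma tv_corner_central (n p : ℕ) [Fact p.Prime] (hn : 2 ≤ n) (c : ZMod p) (g : ↥(UT n p)) :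
    Commute g (tv n p 1 n (le_refl 1) (by omega) (le_refl n) c) := by
  obtain ⟨hd, hl⟩ := g.2
  unfold Commute SemiconjBy
  apply Subtype.ext
  apply Units.ext
  show ((g : (Matrix (Fin n) (Fin n) (ZMod p))ˣ) : Matrix (Fin n) (Fin n) (ZMod p)) *
      Matrix.transvection _ _ c =
    Matrix.transvection _ _ c *
      ((g : (Matrix (Fin n) (Fin n) (ZMod p))ˣ) : Matrix (Fin n) (Fin n) (ZMod p))
  rw [Matrix.transvection, mul_add, add_mul, mul_one, one_mul]
  congr 1
  exact ut_mul_stdBasis_comm hd hl _ _ rfl rfl hn c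

/-! ### The central product of two unitriangular groups -/

/-- The central subgroup `N = {(a, θ(a)⁻¹) : a ∈ K₁}` of `UT_k(F_p) × UT_n(F_p)`, where
`K₁ = ⟨t_{1,k}(1)⟩ = Z(UT_k(F_p))` and `θ : K₁ → K₂ = ⟨t_{1,n}(1)⟩ = Z(UT_n(F_p))` is the
isomorphism sending `t_{1,k}(λ)` to `t_{1,n}(λ)`. -/
def cpN (k n p : ℕ) [Fact p.Prime] (hk : 2 ≤ k) (hn : 2 ≤ n) :
    Subgroup (↥(UT k p) × ↥(UT n p)) where
  carrier := {x | ∃ c : ZMod p,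
    x = (tv k p 1 k (le_refl 1) (by omega) (le_refl k) c,
         (tv n p 1 n (le_refl 1) (by omega) (le_refl n) c)⁻¹)}
  one_mem' := ⟨0, by rw [tv_zero, tv_zero, inv_one]; rfl⟩
  mul_mem' := by
    rintro x y ⟨c, rfl⟩ ⟨d, rfl⟩
    refine ⟨c + d, ?_⟩
    rw [Prod.mk_mul_mk, tv_mul, ← _root_.mul_inv_rev, tv_mul, add_comm d c]
  inv_mem' := by
    rintro x ⟨c, rfl⟩
    refine ⟨-c, ?_⟩
    rw [Prod.inv_mk, tv_inv, inv_inv, tv_inv, neg_neg]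

lemma cpN_normal (k n p : ℕ) [Fact p.Prime] (hk : 2 ≤ k) (hn : 2 ≤ n) :
    (cpN k n p hk hn).Normal := by
  constructor
  rintro x ⟨c, rfl⟩ g
  refine ⟨c, ?_⟩
  have h1 := (tv_corner_central k p hk c g.1).eq
  have h2 := ((tv_corner_central n p hn c g.2).inv_right).eq
  rw [Prod.ext_iff]
  constructor
  · show g.1 * _ * g.1⁻¹ = _
    rw [h1, mul_inv_cancel_right]
  · show g.2 * _ * g.2⁻¹ = _
    rw [h2, mul_inv_cancel_right]

/-!
For a finite group, `B₀ = 0` says exactly that every 2-cocycle which is symmetric on commuting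
pairs is a coboundary: two commuting elements generate a bicyclic subgroup (Smith normal form of
their relation lattice), and a symmetric cocycle on an abelian group defines an abelian extension
by `ℚ/ℤ`, which splits because `ℚ/ℤ` is injective.

Let `f` be such a cocycle on `G = E ⧸ N`. Its inflation to `E = G₁ × G₂` restricts to coboundaries
on the two factors, which commute, so it is the coboundary of some `ψ`. The obstruction to
descending `ψ` to `G` is the character `μ a = ψ (a, θ a⁻¹) - ψ 1` of `K₁`. Symmetry of `f` on the
commuting images of `(x, θ y)` and `(y, θ x)` kills `μ` on commutators lying in `K₁`, so the
transgression of `μ` is a cocycle on `G₁ ⧸ K₁` symmetric on commuting pairs, hence a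
coboundary; this makes `μ` the restriction of a homomorphism `χ : G₁ → ℚ/ℤ`, and
`ψ - χ ∘ Prod.fst` is constant on `N`, so it descends to `G`.
-/

open Subgroup
open scoped commutatorElement

section Cocycles

variable {G H : Type*} [Group G] [Group H] {f : G → G → QmodZ}

def IsSymmOnCommuting (f : G → G → QmodZ) : Prop :=
  ∀ ⦃u v : G⦄, Commute u v → f u v = f v u

def SymmCocyclesAreCoboundaries (G : Type*) [Group G] : Prop :=
  ∀ f : G → G → QmodZ, IsTwoCocycle f → IsSymmOnCommuting f → IsTwoCoboundary f

namespace IsTwoCocycle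

theorem comp (hf : IsTwoCocycle f) (ρ : H →* G) :
    IsTwoCocycle fun a b => f (ρ a) (ρ b) := by
  intro a b c
  simpa only [map_mul] using hf (ρ a) (ρ b) (ρ c)

theorem map_one_left (hf : IsTwoCocycle f) (g : G) : f 1 g = f 1 1 := by
  simpa using (hf 1 1 g).symm

theorem map_one_right (hf : IsTwoCocycle f) (g : G) : f g 1 = f 1 1 := by
  simpa using hf g 1 1

end IsTwoCocycle

theorem IsSymmOnCommuting.comp (hs : IsSymmOnCommuting f) (ρ : H →* G) :
    IsSymmOnCommuting fun a b => f (ρ a) (ρ b) :=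
  fun _ _ h => hs (h.map ρ)

end Cocycles

section Extension

@[ext]
structure CocycleExtension {A : Type*} (f : A → A → QmodZ) where
  fst : QmodZ
  snd : A

namespace CocycleExtension

variable {A : Type*} [Group A] {f : A → A → QmodZ}

-- `f` need not be normalized, hence the `f 1 1` in the zero and in the negation.
instance : Zero (CocycleExtension f) := ⟨⟨-f 1 1, 1⟩⟩

instance : Add (CocycleExtension f) :=
  ⟨fun x y => ⟨x.fst + y.fst + f x.snd y.snd, x.snd * y.snd⟩⟩

instance : Neg (CocycleExtension f) :=
  ⟨fun x => ⟨-x.fst - f x.snd⁻¹ x.snd - f 1 1, x.snd⁻¹⟩⟩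

abbrev addCommGroup [IsMulCommutative A] (hf : IsTwoCocycle f) (hs : ∀ a b, f a b = f b a) :
    AddCommGroup (CocycleExtension f) :=
  { AddGroup.ofLeftAxioms
      (fun x y z => by
        ext
        · show x.fst + y.fst + f x.snd y.snd + z.fst + f (x.snd * y.snd) z.snd =
            x.fst + (y.fst + z.fst + f y.snd z.snd) + f x.snd (y.snd * z.snd)
          linear_combination (norm := abel) hf x.snd y.snd z.snd
        · exact mul_assoc x.snd y.snd z.snd)
      (fun x => by
        ext
        · show -f 1 1 + x.fst + f 1 x.snd = x.fst
          rw [hf.map_one_left x.snd]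
          abel
        · exact one_mul x.snd)
      (fun x => by
        ext
        · show -x.fst - f x.snd⁻¹ x.snd - f 1 1 + x.fst + f x.snd⁻¹ x.snd = -f 1 1
          abel
        · exact inv_mul_cancel x.snd) with
    add_comm := fun x y => by
      ext
      · show x.fst + y.fst + f x.snd y.snd = y.fst + x.fst + f y.snd x.snd
        rw [hs, add_comm x.fst]
      · exact mul_comm' x.snd y.snd }

end CocycleExtension

theorem IsTwoCocycle.isTwoCoboundary_of_symm {A : Type*} [Group A] [IsMulCommutative A]
    {f : A → A → QmodZ} (hf : IsTwoCocycle f) (hs : ∀ a b, f a b = f b a) :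
    IsTwoCoboundary f := by
  let _ := CocycleExtension.addCommGroup hf hs
  have : Fact ((0 : ℚ) < 1) := ⟨one_pos⟩
  let ι : QmodZ →+ CocycleExtension f := AddMonoidHom.mk' (fun d => ⟨d - f 1 1, 1⟩) fun d e => by
    ext
    · show d + e - f 1 1 = d - f 1 1 + (e - f 1 1) + f 1 1
      abel
    · exact (mul_one 1).symm
  have hι : Function.Injective ι := fun d e h =>
    sub_left_injective (congrArg CocycleExtension.fst h)
  obtain ⟨r, hr⟩ :=
    (Module.Baer.of_divisible QmodZ).extension_property_addMonoidHom ι hι (AddMonoidHom.id _)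
  refine ⟨fun a => r ⟨0, a⟩, fun a b => ?_⟩
  have hsplit : (⟨0, a⟩ : CocycleExtension f) + ⟨0, b⟩ = ι (f a b) + ⟨0, a * b⟩ := by
    ext
    · show 0 + 0 + f a b = f a b - f 1 1 + 0 + f 1 (a * b)
      rw [hf.map_one_left (a * b)]
      abel
    · exact (one_mul (a * b)).symm
  have := congrArg r hsplit
  rw [map_add, map_add, ← AddMonoidHom.comp_apply r ι, hr, AddMonoidHom.id_apply] at this
  rw [this]
  abel

section Bicyclic

theorem IsBicyclic.of_mulEquiv_prod {A : Type u} [Group A] {B C : Type} [Group B] [Group C]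
    [IsCyclic B] [IsCyclic C] (e : A ≃* B × C) : IsBicyclic A :=
  Or.inr ⟨ULift B, ULift C, inferInstance, inferInstance,
    isCyclic_of_surjective _ MulEquiv.ulift.symm.surjective,
    isCyclic_of_surjective _ MulEquiv.ulift.symm.surjective,
    ⟨e.trans (MulEquiv.prodCongr MulEquiv.ulift.symm MulEquiv.ulift.symm)⟩⟩

theorem IsBicyclic.isMulCommutative {A : Type u} [Group A] (h : IsBicyclic A) :
    IsMulCommutative A := by
  rcases h with h | ⟨B, C, _, _, _, _, ⟨e⟩⟩
  · let _ := IsCyclic.commGroup (α := A)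
    infer_instance
  · let _ := IsCyclic.commGroup (α := B)
    let _ := IsCyclic.commGroup (α := C)
    exact ⟨⟨fun a b => e.injective (by rw [map_mul, map_mul, mul_comm])⟩⟩

open scoped IsMulCommutative in
theorem IsBicyclic.of_closure_pair_eq_top {A : Type u} [Group A] [IsMulCommutative A] [Finite A]
    {a b : A} (h : closure {a, b} = ⊤) : IsBicyclic A := by
  let φ : (Fin 2 → ℤ) →ₗ[ℤ] Additive A :=
    Fintype.linearCombination ℤ ![Additive.ofMul a, Additive.ofMul b]
  have hφ : Function.Surjective φ := fun x => by
    obtain ⟨m, n, hmn⟩ := mem_closure_pair.1 (h ▸ mem_top x.toMul)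
    refine ⟨![m, n], ?_⟩
    simp only [φ, Fintype.linearCombination_apply, Fin.sum_univ_two]
    exact congrArg Additive.ofMul hmn
  let e₁ := φ.quotKerEquivOfSurjective hφ
  have : Finite ((Fin 2 → ℤ) ⧸ LinearMap.ker φ) := Finite.of_equiv _ e₁.symm.toEquiv
  let e₂ := (LinearMap.ker φ).quotientEquivPiZMod (Pi.basisFun ℤ (Fin 2))
    ((Submodule.finiteQuotient_iff _).1 this)
  exact .of_mulEquiv_prod <| (AddEquiv.toMultiplicativeRight
    (e₁.symm.toAddEquiv.trans (e₂.trans (LinearEquiv.piFinTwo ℤ _).toAddEquiv))).trans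
    (MulEquiv.prodMultiplicative _ _)

theorem exists_isBicyclic_subgroup_mem_mem {G : Type u} [Group G] [Finite G] {u v : G}
    (h : Commute u v) : ∃ A : Subgroup G, IsBicyclic A ∧ u ∈ A ∧ v ∈ A := by
  have hu : u ∈ closure {u, v} := subset_closure (by simp)
  have hv : v ∈ closure {u, v} := subset_closure (by simp)
  have := isMulCommutative_closure (k := {u, v}) (by
    rintro x (rfl | rfl) y (rfl | rfl) <;> first | rfl | exact h.eq | exact h.symm.eq)
  refine ⟨_, .of_closure_pair_eq_top (a := ⟨u, hu⟩) (b := ⟨v, hv⟩) ?_, hu, hv⟩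
  convert closure_closure_coe_preimage (k := {u, v}) using 2
  ext ⟨x, hx⟩
  simp

end Bicyclic

section Restriction

variable {G : Type u} [Group G] {f : G → G → QmodZ}

theorem IsSymmOnCommuting.of_isTwoCoboundary_restrict [Finite G]
    (h : ∀ A : Subgroup G, IsBicyclic A → IsTwoCoboundary fun a b : A => f a b) :
    IsSymmOnCommuting f := by
  intro u v huv
  obtain ⟨A, hA, hu, hv⟩ := exists_isBicyclic_subgroup_mem_mem huv
  obtain ⟨φ, hφ⟩ := h A hA
  have hcomm : (⟨u, hu⟩ * ⟨v, hv⟩ : A) = ⟨v, hv⟩ * ⟨u, hu⟩ := Subtype.ext huv.eq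
  have huv' := hφ ⟨u, hu⟩ ⟨v, hv⟩
  have hvu := hφ ⟨v, hv⟩ ⟨u, hu⟩
  dsimp only at huv' hvu
  rw [huv', hvu, hcomm, add_comm (φ _)]

theorem IsTwoCocycle.isTwoCoboundary_restrict (hf : IsTwoCocycle f) (hs : IsSymmOnCommuting f)
    {A : Subgroup G} (hA : IsBicyclic A) : IsTwoCoboundary fun a b : A => f a b :=
  have := hA.isMulCommutative
  (hf.comp A.subtype).isTwoCoboundary_of_symm fun a b =>
    hs (Commute.map (mul_comm' a b) A.subtype)

theorem bogomolovMultiplierTrivial_iff [Finite G] :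
    BogomolovMultiplierTrivial G ↔ SymmCocyclesAreCoboundaries G :=
  ⟨fun h f hf hs => h f hf fun _ hA => hf.isTwoCoboundary_restrict hs hA,
    fun h f hf hbic => h f hf (.of_isTwoCoboundary_restrict hbic)⟩

end Restriction

theorem IsTwoCocycle.isTwoCoboundary_prod {H₁ H₂ : Type*} [Group H₁] [Group H₂]
    {F : H₁ × H₂ → H₁ × H₂ → QmodZ} (hF : IsTwoCocycle F)
    (hsymm : ∀ a b, F (1, b) (a, 1) = F (a, 1) (1, b))
    (h₁ : IsTwoCoboundary fun a b : H₁ => F (a, 1) (b, 1))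
    (h₂ : IsTwoCoboundary fun a b : H₂ => F (1, a) (1, b)) : IsTwoCoboundary F := by
  obtain ⟨φ₁, hφ₁⟩ := h₁
  obtain ⟨φ₂, hφ₂⟩ := h₂
  -- `(g₁, g₂) = (g₁, 1) * (1, g₂)`
  refine ⟨fun x => φ₁ x.1 + φ₂ x.2 - F (x.1, 1) (1, x.2), ?_⟩
  rintro ⟨g₁, g₂⟩ ⟨h₁, h₂⟩
  have E₁ := hF (g₁, 1) (1, g₂) (h₁, h₂)
  have E₂ := hF (1, g₂) (h₁, 1) (1, h₂)
  have E₃ := hF (h₁, 1) (1, g₂) (1, h₂)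
  have E₄ := hF (g₁, 1) (h₁, 1) (1, g₂ * h₂)
  simp only [Prod.mk_mul_mk, one_mul, mul_one] at E₁ E₂ E₃ E₄ ⊢
  have A₁ := hφ₁ g₁ h₁
  have A₂ := hφ₂ g₂ h₂
  dsimp only at A₁ A₂
  linear_combination (norm := abel) E₁ - E₂ + E₃ - E₄ + A₁ + A₂ + hsymm h₁ g₂

section Inflation

variable {E : Type*} [Group E] {N : Subgroup E} [N.Normal] {f : E ⧸ N → E ⧸ N → QmodZ}
  {ψ : E → QmodZ}

theorem IsTwoCocycle.inflation_mul_of_mem (hf : IsTwoCocycle f)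
    (hψ : ∀ x y : E, f x y = ψ x + ψ y - ψ (x * y)) {x y : E} (hxy : x ∈ N ∨ y ∈ N) :
    ψ (x * y) = ψ x + ψ y - ψ 1 := by
  have h₁ : f 1 1 = ψ 1 := by simpa using hψ 1 1
  have h₂ : f x y = ψ 1 := by
    rcases hxy with hx | hy
    · rw [(QuotientGroup.eq_one_iff x).2 hx, hf.map_one_left, h₁]
    · rw [(QuotientGroup.eq_one_iff y).2 hy, hf.map_one_right, h₁]
  rw [hψ] at h₂
  linear_combination (norm := abel) -h₂

theorem IsTwoCocycle.isTwoCoboundary_of_inflation (hf : IsTwoCocycle f)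
    (hψ : ∀ x y : E, f x y = ψ x + ψ y - ψ (x * y)) (hN : ∀ n ∈ N, ψ n = ψ 1) :
    IsTwoCoboundary f := by
  have hout (x : E) : ψ (x : E ⧸ N).out = ψ x := by
    obtain ⟨⟨n, hn⟩, h⟩ := QuotientGroup.mk_out_eq_mul N x
    rw [h, hf.inflation_mul_of_mem hψ (.inr hn), hN n hn, add_sub_cancel_right]
  refine ⟨fun z => ψ z.out, fun z w => ?_⟩
  obtain ⟨x, rfl⟩ := QuotientGroup.mk_surjective z
  obtain ⟨y, rfl⟩ := QuotientGroup.mk_surjective w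
  rw [← QuotientGroup.mk_mul]
  simp only [hout]
  exact hψ x y

end Inflation

section Transgression

variable {G : Type*} [Group G] {K : Subgroup G} [K.Normal] {μ : G → QmodZ} {r : G ⧸ K → G}

def transgression (μ : G → QmodZ) (r : G ⧸ K → G) (s t : G ⧸ K) : QmodZ :=
  μ (r s * r t * (r (s * t))⁻¹)

theorem section_mul_mul_inv_mem (hr : ∀ q, (r q : G ⧸ K) = q) (s t : G ⧸ K) :
    r s * r t * (r (s * t))⁻¹ ∈ K := by
  rw [← QuotientGroup.eq_one_iff]
  simp [hr]

theorem transgression_isTwoCocycle (hK : K ≤ center G) (hr : ∀ q, (r q : G ⧸ K) = q)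
    (hμ : ∀ a ∈ K, ∀ b ∈ K, μ (a * b) = μ a + μ b) : IsTwoCocycle (transgression μ r) := by
  intro s t w
  have hc := section_mul_mul_inv_mem hr
  have hcen := mem_center_iff.1 (hK (hc t w)) (r (t * w) * (r (s * (t * w)))⁻¹)
  simp only [transgression]
  rw [← hμ _ (hc s t) _ (hc _ w), ← hμ _ (hc s _) _ (hc t w), mul_assoc s t w]
  congr 1
  calc r s * r t * (r (s * t))⁻¹ * (r (s * t) * r w * (r (s * (t * w)))⁻¹)
      = r s * (r t * r w * (r (t * w))⁻¹ * (r (t * w) * (r (s * (t * w)))⁻¹)) := by group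
    _ = r s * r (t * w) * (r (s * (t * w)))⁻¹ * (r t * r w * (r (t * w))⁻¹) := by
      rw [← hcen]; group

theorem transgression_isSymmOnCommuting (hr : ∀ q, (r q : G ⧸ K) = q)
    (hμ : ∀ a ∈ K, ∀ b ∈ K, μ (a * b) = μ a + μ b)
    (hμc : ∀ x y : G, ⁅x, y⁆ ∈ K → μ ⁅x, y⁆ = 0) : IsSymmOnCommuting (transgression μ r) := by
  intro s t hst
  have hcomm : ⁅r s, r t⁆ ∈ K := by
    rw [← QuotientGroup.eq_one_iff, ← QuotientGroup.mk'_apply, map_commutatorElement,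
      QuotientGroup.mk'_apply, QuotientGroup.mk'_apply, hr, hr,
      commutatorElement_eq_one_iff_commute]
    exact hst
  have hsplit : r s * r t * (r (s * t))⁻¹ = ⁅r s, r t⁆ * (r t * r s * (r (t * s))⁻¹) := by
    rw [hst.eq, commutatorElement_def]
    group
  simp only [transgression]
  rw [hsplit, hμ _ hcomm _ (section_mul_mul_inv_mem hr t s), hμc _ _ hcomm, zero_add]

theorem exists_extension_of_commutator_eq_zero (hK : K ≤ center G)
    (hQ : SymmCocyclesAreCoboundaries (G ⧸ K))
    (hμ : ∀ a ∈ K, ∀ b ∈ K, μ (a * b) = μ a + μ b)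
    (hμc : ∀ x y : G, ⁅x, y⁆ ∈ K → μ ⁅x, y⁆ = 0) :
    ∃ χ : G → QmodZ, (∀ g h, χ (g * h) = χ g + χ h) ∧ ∀ a ∈ K, χ a = μ a := by
  let r : G ⧸ K → G := Quotient.out
  have hr : ∀ q, (r q : G ⧸ K) = q := QuotientGroup.out_eq'
  obtain ⟨τ, hτ⟩ := hQ _ (transgression_isTwoCocycle hK hr hμ)
    (transgression_isSymmOnCommuting hr hμ hμc)
  have hc := section_mul_mul_inv_mem hr
  have hdef (g : G) : g * (r g)⁻¹ ∈ K := by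
    rw [← QuotientGroup.eq_one_iff]
    simp [hr]
  refine ⟨fun g => μ (g * (r g)⁻¹) + τ g, fun g h => ?_, fun a ha => ?_⟩
  · have hcen := mem_center_iff.1 (hK (hdef h)) (r g)
    have hsplit : g * h * (r (g * h : G ⧸ K))⁻¹ =
        g * (r g)⁻¹ * (h * (r h)⁻¹ * (r g * r h * (r (g * h : G ⧸ K))⁻¹)) :=
      calc g * h * (r (g * h : G ⧸ K))⁻¹
          = g * (r g)⁻¹ * (r g * (h * (r h)⁻¹)) * (r h * (r (g * h : G ⧸ K))⁻¹) := by group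
        _ = _ := by rw [hcen]; group
    have hτgh := hτ g h
    simp only [transgression] at hτgh
    dsimp only
    rw [QuotientGroup.mk_mul, hsplit, hμ _ (hdef g) _ (mul_mem (hdef h) (hc g h)),
      hμ _ (hdef h) _ (hc g h), hτgh]
    abel
  · have h1 : r 1 ∈ K := by simpa using hc 1 1
    have hτ1 : μ (r 1) = τ 1 := by simpa [transgression] using hτ 1 1
    have hμ1 : μ 1 = 0 := by simpa using hμ 1 K.one_mem 1 K.one_mem
    have hinv : μ (r 1)⁻¹ + μ (r 1) = 0 := by
      rw [← hμ _ (inv_mem h1) _ h1, inv_mul_cancel, hμ1]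
    dsimp only
    rw [(QuotientGroup.eq_one_iff a).2 ha, hμ _ ha _ (inv_mem h1), ← hτ1, add_assoc, hinv,
      add_zero]

end Transgression

section CentralProduct

variable {G₁ G₂ : Type*} [Group G₁] [Group G₂] {K₁ : Subgroup G₁} {θ : G₁ →* G₂}
  {N : Subgroup (G₁ × G₂)} [N.Normal]

theorem IsSymmOnCommuting.inflation_commutator_eq {f : (G₁ × G₂) ⧸ N → (G₁ × G₂) ⧸ N → QmodZ}
    (hs : IsSymmOnCommuting f) (hf : IsTwoCocycle f) {ψ : G₁ × G₂ → QmodZ}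
    (hψ : ∀ x y : G₁ × G₂, f x y = ψ x + ψ y - ψ (x * y)) {x y : G₁}
    (hxy : ((⁅x, y⁆, (θ ⁅x, y⁆)⁻¹) : G₁ × G₂) ∈ N) :
    ψ (⁅x, y⁆, (θ ⁅x, y⁆)⁻¹) = ψ 1 := by
  have hswap : ((x, θ y) : G₁ × G₂) * (y, θ x) =
      (⁅x, y⁆, (θ ⁅x, y⁆)⁻¹) * ((y, θ x) * (x, θ y)) := by
    ext <;> simp [commutatorElement_def]; group
  have hcomm : Commute (((x, θ y) : G₁ × G₂) : (G₁ × G₂) ⧸ N) ((y, θ x) : G₁ × G₂) := by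
    rw [Commute, SemiconjBy, ← QuotientGroup.mk_mul, hswap, QuotientGroup.mk_mul,
      (QuotientGroup.eq_one_iff _).2 hxy, one_mul, QuotientGroup.mk_mul]
  have := hs hcomm
  rw [hψ, hψ, hswap, hf.inflation_mul_of_mem hψ (.inl hxy)] at this
  linear_combination (norm := abel) -this

theorem symmCocyclesAreCoboundaries_centralProduct [K₁.Normal] (hK₁ : K₁ ≤ center G₁)
    (hN : (N : Set (G₁ × G₂)) = {x | ∃ a ∈ K₁, x = (a, (θ a)⁻¹)})
    (hQ : SymmCocyclesAreCoboundaries (G₁ ⧸ K₁)) (h₁ : SymmCocyclesAreCoboundaries G₁)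
    (h₂ : SymmCocyclesAreCoboundaries G₂) : SymmCocyclesAreCoboundaries ((G₁ × G₂) ⧸ N) := by
  intro f hf hs
  have hNmem (a : G₁) (ha : a ∈ K₁) : ((a, (θ a)⁻¹) : G₁ × G₂) ∈ N := by
    rw [← SetLike.mem_coe, hN]
    exact ⟨a, ha, rfl⟩
  let π := QuotientGroup.mk' N
  obtain ⟨ψ, hψ⟩ := (hf.comp π).isTwoCoboundary_prod
    (fun a b => hs (((Commute.one_left a).prod (Commute.one_right b)).map π))
    (h₁ _ ((hf.comp π).comp (.inl G₁ G₂)) ((hs.comp π).comp (.inl G₁ G₂)))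
    (h₂ _ ((hf.comp π).comp (.inr G₁ G₂)) ((hs.comp π).comp (.inr G₁ G₂)))
  replace hψ : ∀ x y : G₁ × G₂, f x y = ψ x + ψ y - ψ (x * y) := hψ
  obtain ⟨χ, hχ, hχK⟩ := exists_extension_of_commutator_eq_zero hK₁ hQ
    (μ := fun a => ψ (a, (θ a)⁻¹) - ψ 1)
    (fun a ha b _ => by
      have hprod : ((a, (θ a)⁻¹) : G₁ × G₂) * (b, (θ b)⁻¹) = (a * b, (θ (a * b))⁻¹) := by
        rw [Prod.mk_mul_mk, ← _root_.mul_inv_rev, ← map_mul, mem_center_iff.1 (hK₁ ha) b]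
      rw [← hprod, hf.inflation_mul_of_mem hψ (.inl (hNmem a ha))]
      abel)
    (fun x y h => sub_eq_zero.2 (hs.inflation_commutator_eq hf hψ (hNmem _ h)))
  refine hf.isTwoCoboundary_of_inflation (ψ := fun x => ψ x - χ x.1) (fun x y => ?_) ?_
  · rw [hψ, Prod.fst_mul, hχ]
    abel
  · rintro n hn
    obtain ⟨a, ha, rfl⟩ := (Set.ext_iff.1 hN n).1 hn
    have hχ1 : χ 1 = 0 := by simpa using hχ 1 1
    rw [hχK a ha, Prod.fst_one, hχ1]
    abel

end CentralProduct

theorem B0_central_product_general (G₁ G₂ : Type u) [Group G₁] [Group G₂] [Finite G₁] [Finite G₂]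
    (K₁ : Subgroup G₁)
    (hK₁ : K₁ ≤ Subgroup.center G₁)
    (θ : G₁ →* G₂)
    (N : Subgroup (G₁ × G₂)) (hNormalN : N.Normal) (hNormalK : K₁.Normal)
    (hN : (N : Set (G₁ × G₂)) = {x | ∃ a ∈ K₁, x = (a, (θ a)⁻¹)}) :
    haveI := hNormalN
    haveI := hNormalK
    BogomolovMultiplierTrivial (G₁ ⧸ K₁) → BogomolovMultiplierTrivial G₁ →
      BogomolovMultiplierTrivial G₂ → BogomolovMultiplierTrivial ((G₁ × G₂) ⧸ N) := by
  intro hQ h₁ h₂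
  rw [bogomolovMultiplierTrivial_iff] at hQ h₁ h₂ ⊢
  exact symmCocyclesAreCoboundaries_centralProduct hK₁ hN hQ h₁ h₂

theorem B0_central_product (G₁ G₂ : Type u) [Group G₁] [Group G₂] [Finite G₁] [Finite G₂]
    (K₁ : Subgroup G₁) (K₂ : Subgroup G₂)
    (hK₁ : K₁ ≤ Subgroup.center G₁) (hK₂ : K₂ ≤ Subgroup.center G₂)
    (θ : G₁ →* G₂) (hinj : Set.InjOn θ K₁) (hsurj : Subgroup.map θ K₁ = K₂)
    (N : Subgroup (G₁ × G₂)) (hNormalN : N.Normal) (hNormalK : K₁.Normal)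
    (hN : (N : Set (G₁ × G₂)) = {x | ∃ a ∈ K₁, x = (a, (θ a)⁻¹)}) :
    haveI := hNormalN
    haveI := hNormalK
    BogomolovMultiplierTrivial (G₁ ⧸ K₁) → BogomolovMultiplierTrivial G₁ →
      BogomolovMultiplierTrivial G₂ → BogomolovMultiplierTrivial ((G₁ × G₂) ⧸ N) :=
  B0_central_product_general G₁ G₂ K₁ hK₁ θ N hNormalN hNormalK hN
end Extension
end

section
/- Let p be a prime, n ≥ 2, and r, s ≥ 1. Then the commutator subgroup of UT_n^r(F_p) and UT_n^s(F_p) inside UT_n(F_p) equals UT_n^{r+s}(F_p), i.e. [UT_n^r(F_p), UT_n^s(F_p)] = UT_n^{r+s}(F_p) (where UT_n^ℓ(F_p) is the trivial subgroup when ℓ ≥ n). -/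
open Matrix

/-! Write `x ∈ UT_n^ℓ` as `1 + N` with `N` supported on the superdiagonals of index `≥ ℓ`.
Since `[x, y] - 1 = (N_x N_y - N_y N_x) x⁻¹ y⁻¹`, commutators of `UT_n^r` and `UT_n^s` lie in
`UT_n^{r+s}`. Conversely `[t_{a,a+r}(c), t_{a+r,b}(1)] = t_{ab}(c)`, and `UT_n^ℓ` is generated by
the transvections `t_{ab}(c)` with `b - a ≥ ℓ`. The latter follows by descending induction on `ℓ`:
reading off the `ℓ`-th superdiagonal is a homomorphism from `UT_n^ℓ` to an additive group, with
kernel `UT_n^{ℓ+1}`, and its image is spanned by the images of the transvections `t_{a,a+ℓ}(c)`. -/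

open scoped commutatorElement

section Superdiagonals

variable {n : ℕ} {R : Type*} [Ring R] {ℓ m : ℕ} {M N : Matrix (Fin n) (Fin n) R}

def SuperdiagSupported (ℓ : ℕ) (M : Matrix (Fin n) (Fin n) R) : Prop :=
  ∀ i j : Fin n, (j : ℕ) < i + ℓ → M i j = 0

def superdiag (ℓ : ℕ) : Matrix (Fin n) (Fin n) R →+ Matrix (Fin n) (Fin n) R where
  toFun M := Matrix.of fun i j => if (j : ℕ) = i + ℓ then M i j else 0
  map_zero' := by ext; simp
  map_add' M N := by ext i j; simp only [of_apply, Matrix.add_apply]; split_ifs <;> simp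

lemma superdiag_apply (i j : Fin n) :
    superdiag ℓ M i j = if (j : ℕ) = i + ℓ then M i j else 0 := rfl

lemma superdiag_single (i j : Fin n) (c : R) :
    superdiag ℓ (single i j c) = if (j : ℕ) = i + ℓ then single i j c else 0 := by
  split_ifs with hij
  · ext a b
    rw [superdiag_apply]
    split_ifs with hab
    · rfl
    · exact (single_apply_of_ne _ _ _ _ _ (by rintro ⟨rfl, rfl⟩; exact hab hij)).symm
  · ext a b
    rw [superdiag_apply, Matrix.zero_apply]
    split_ifs with hab
    · exact single_apply_of_ne _ _ _ _ _ (by rintro ⟨rfl, rfl⟩; exact hij hab)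
    · rfl

namespace SuperdiagSupported

lemma mul (hM : SuperdiagSupported ℓ M) (hN : SuperdiagSupported m N) :
    SuperdiagSupported (ℓ + m) (M * N) := by
  intro i j hij
  refine Matrix.mul_apply.trans <| Finset.sum_eq_zero fun k _ => ?_
  by_cases hk : (k : ℕ) < i + ℓ
  · rw [hM i k hk, zero_mul]
  · rw [hN k j (by omega), mul_zero]

lemma sub (hM : SuperdiagSupported ℓ M) (hN : SuperdiagSupported ℓ N) :
    SuperdiagSupported ℓ (M - N) :=
  fun i j hij => by rw [Matrix.sub_apply, hM i j hij, hN i j hij, sub_zero]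

lemma eq_zero (hM : SuperdiagSupported ℓ M) (hn : n ≤ ℓ) : M = 0 :=
  Matrix.ext fun i j => hM i j (by omega)

lemma superdiag_eq_zero (hM : SuperdiagSupported m M) (hℓ : ℓ < m) : superdiag ℓ M = 0 := by
  ext i j
  rw [superdiag_apply]
  split_ifs with hij
  exacts [hM i j (by omega), rfl]

lemma succ_of_superdiag_eq_zero (hM : SuperdiagSupported ℓ M) (h : superdiag ℓ M = 0) :
    SuperdiagSupported (ℓ + 1) M := by
  intro i j hij
  by_cases hj : (j : ℕ) = i + ℓ
  · simpa [superdiag_apply, hj] using congrFun₂ h i j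
  · exact hM i j (by omega)

end SuperdiagSupported

lemma superdiag_mul_sub_one {A B : Matrix (Fin n) (Fin n) R} (hℓ : 1 ≤ ℓ)
    (hA : SuperdiagSupported ℓ (A - 1)) (hB : SuperdiagSupported ℓ (B - 1)) :
    superdiag ℓ (A * B - 1) = superdiag ℓ (A - 1) + superdiag ℓ (B - 1) := by
  rw [show A * B - 1 = (A - 1) + (B - 1) + (A - 1) * (B - 1) by noncomm_ring, map_add, map_add,
    (hA.mul hB).superdiag_eq_zero (by omega), add_zero]

end Superdiagonals

lemma Units.val_commutatorElement_sub_one {A : Type*} [Ring A] (x y : Aˣ) :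
    ((⁅x, y⁆ : Aˣ) : A) - 1 = ((x - 1) * (y - 1) - (y - 1) * (x - 1)) * ↑x⁻¹ * ↑y⁻¹ := by
  have hyx : (y : A) * x * ↑x⁻¹ * ↑y⁻¹ = 1 := by
    rw [mul_assoc (y : A), Units.mul_inv, mul_one, Units.mul_inv]
  rw [show ((x : A) - 1) * (y - 1) - (y - 1) * (x - 1) = x * y - y * x by noncomm_ring,
    sub_mul, sub_mul, hyx, commutatorElement_def]
  simp only [Units.val_mul]

section Unitriangular

variable {n p ℓ r s : ℕ}

lemma UTP.superdiagSupported_zero {A : Matrix (Fin n) (Fin n) (ZMod p)} (hA : UTP n p ℓ A) :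
    SuperdiagSupported 0 A :=
  fun i j hij => hA.2 i j (Or.inl (by omega))

lemma utp_iff_superdiagSupported_sub_one {A : Matrix (Fin n) (Fin n) (ZMod p)} (hℓ : 1 ≤ ℓ) :
    UTP n p ℓ A ↔ SuperdiagSupported ℓ (A - 1) := by
  constructor
  · intro hA i j hij
    by_cases hij' : i = j
    · subst hij'
      rw [Matrix.sub_apply, hA.1, one_apply_eq, sub_self]
    · have := Fin.val_ne_of_ne hij'
      rw [Matrix.sub_apply, one_apply_ne hij', sub_zero]
      exact hA.2 i j (by omega)
  · intro h
    refine ⟨fun i => ?_, fun i j hij => ?_⟩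
    · simpa [sub_eq_zero] using h i i (by omega)
    · have hij' : i ≠ j := by rintro rfl; omega
      simpa [one_apply_ne hij'] using h i j (by omega)

variable [Fact p.Prime]

lemma mem_UTd_iff_superdiagSupported_sub_one {x : (Matrix (Fin n) (Fin n) (ZMod p))ˣ}
    (hℓ : 1 ≤ ℓ) :
    x ∈ UTd n p ℓ ↔ SuperdiagSupported ℓ ((x : Matrix (Fin n) (Fin n) (ZMod p)) - 1) :=
  utp_iff_superdiagSupported_sub_one hℓ

lemma UTd_eq_bot (hℓ : 1 ≤ ℓ) (hn : n ≤ ℓ) : UTd n p ℓ = ⊥ :=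
  (Subgroup.eq_bot_iff_forall _).2 fun _ hx =>
    Units.ext (sub_eq_zero.1 (((mem_UTd_iff_superdiagSupported_sub_one hℓ).1 hx).eq_zero hn))

lemma commutatorElement_mem_UTd (hr : 1 ≤ r) (hs : 1 ≤ s)
    {x y : (Matrix (Fin n) (Fin n) (ZMod p))ˣ} (hx : x ∈ UTd n p r) (hy : y ∈ UTd n p s) :
    ⁅x, y⁆ ∈ UTd n p (r + s) := by
  have hx' := (mem_UTd_iff_superdiagSupported_sub_one hr).1 hx
  have hy' := (mem_UTd_iff_superdiagSupported_sub_one hs).1 hy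
  have hxy : SuperdiagSupported (r + s)
      ((↑x - 1) * (↑y - 1) - (↑y - 1) * (↑x - 1) : Matrix (Fin n) (Fin n) (ZMod p)) :=
    (hx'.mul hy').sub (add_comm s r ▸ hy'.mul hx')
  rw [mem_UTd_iff_superdiagSupported_sub_one (by omega), Units.val_commutatorElement_sub_one]
  exact (hxy.mul (UTP.superdiagSupported_zero (inv_mem hx))).mul
    (UTP.superdiagSupported_zero (inv_mem hy))

lemma commutator_UTd_le (hr : 1 ≤ r) (hs : 1 ≤ s) :
    ⁅UTd n p r, UTd n p s⁆ ≤ UTd n p (r + s) :=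
  Subgroup.commutator_le.2 fun _ hx _ hy => commutatorElement_mem_UTd hr hs hx hy

lemma tvUnit_sub_one {a b : Fin n} (hab : a ≠ b) (c : ZMod p) :
    (tvUnit n p a b hab c : Matrix (Fin n) (Fin n) (ZMod p)) - 1 = single a b c :=
  add_sub_cancel_left _ _

lemma tvUnit_mem_UTd {a b : Fin n} (hab : a ≠ b) (hℓ : 1 ≤ ℓ) (h : (a : ℕ) + ℓ ≤ b)
    (c : ZMod p) : tvUnit n p a b hab c ∈ UTd n p ℓ := by
  rw [mem_UTd_iff_superdiagSupported_sub_one hℓ]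
  intro i j hij
  rw [tvUnit_sub_one]
  exact single_apply_of_ne _ _ _ _ _ (by rintro ⟨rfl, rfl⟩; omega)

lemma tvUnit_commutatorElement {a b e : Fin n} (hab : a ≠ b) (hbe : b ≠ e) (hae : a ≠ e)
    (c d : ZMod p) :
    ⁅tvUnit n p a b hab c, tvUnit n p b e hbe d⁆ = tvUnit n p a e hae (c * d) := by
  have hcomm : tvUnit n p a b hab c * tvUnit n p b e hbe d =
      tvUnit n p a e hae (c * d) * (tvUnit n p b e hbe d * tvUnit n p a b hab c) := by
    apply Units.ext
    simp only [Units.val_mul, tvUnit, transvection, add_mul, mul_add, one_mul, mul_one,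
      single_mul_single_same, Matrix.single_mul_single_of_ne, hae.symm, hbe.symm, ne_eq,
      not_false_eq_true, add_zero]
    abel
  rw [commutatorElement_def, hcomm]
  group

lemma tvUnit_mem_commutator_UTd {a b : Fin n} (hab : a ≠ b) (hr : 1 ≤ r) (hs : 1 ≤ s)
    (h : (a : ℕ) + (r + s) ≤ b) (c : ZMod p) :
    tvUnit n p a b hab c ∈ ⁅UTd n p r, UTd n p s⁆ := by
  let m : Fin n := ⟨a + r, by omega⟩
  have ham : a ≠ m := Fin.ne_of_val_ne (by simp [m]; omega)
  have hmb : m ≠ b := Fin.ne_of_val_ne (by simp [m]; omega)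
  rw [← mul_one c, ← tvUnit_commutatorElement ham hmb hab c 1]
  exact Subgroup.commutator_mem_commutator (tvUnit_mem_UTd ham hr (by simp [m]) c)
    (tvUnit_mem_UTd hmb hs (by simp [m]; omega) 1)

def superdiagHom (hℓ : 1 ≤ ℓ) :
    UTd n p ℓ →* Multiplicative (Matrix (Fin n) (Fin n) (ZMod p)) where
  toFun x :=
    .ofAdd (superdiag ℓ (((x : (Matrix (Fin n) (Fin n) (ZMod p))ˣ) : Matrix _ _ _) - 1))
  map_one' := by simp
  map_mul' x y := by
    simp only [Subgroup.coe_mul, Units.val_mul]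
    rw [superdiag_mul_sub_one hℓ ((mem_UTd_iff_superdiagSupported_sub_one hℓ).1 x.2)
      ((mem_UTd_iff_superdiagSupported_sub_one hℓ).1 y.2)]
    rfl

lemma superdiagHom_apply (hℓ : 1 ≤ ℓ) (x : UTd n p ℓ) :
    superdiagHom hℓ x =
      .ofAdd (superdiag ℓ (((x : (Matrix (Fin n) (Fin n) (ZMod p))ˣ) : Matrix _ _ _) - 1)) :=
  rfl

lemma mem_UTd_succ_of_superdiagHom_eq_one (hℓ : 1 ≤ ℓ) {x : UTd n p ℓ}
    (h : superdiagHom hℓ x = 1) :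
    (x : (Matrix (Fin n) (Fin n) (ZMod p))ˣ) ∈ UTd n p (ℓ + 1) := by
  rw [superdiagHom_apply, ofAdd_eq_one] at h
  exact (mem_UTd_iff_superdiagSupported_sub_one (by omega)).2
    (((mem_UTd_iff_superdiagSupported_sub_one hℓ).1 x.2).succ_of_superdiag_eq_zero h)

lemma superdiagHom_tvUnit (hℓ : 1 ≤ ℓ) {a b : Fin n} (hab : a ≠ b) (h : (a : ℕ) + ℓ = b)
    (c : ZMod p) :
    superdiagHom hℓ ⟨tvUnit n p a b hab c, tvUnit_mem_UTd hab hℓ h.le c⟩ =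
      .ofAdd (single a b c) := by
  simp only [superdiagHom_apply, tvUnit_sub_one, superdiag_single, if_pos h.symm]

lemma superdiagHom_mem_map_subgroupOf {S : Subgroup (Matrix (Fin n) (Fin n) (ZMod p))ˣ}
    (hℓ : 1 ≤ ℓ)
    (htv : ∀ (a b : Fin n) (hab : a ≠ b), (a : ℕ) + ℓ = b → ∀ c, tvUnit n p a b hab c ∈ S)
    (x : UTd n p ℓ) :
    superdiagHom hℓ x ∈ (S.subgroupOf (UTd n p ℓ)).map (superdiagHom hℓ) := by
  rw [superdiagHom_apply, matrix_eq_sum_single (_ - 1), map_sum, ofAdd_sum]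
  refine Subgroup.prod_mem _ fun i _ => ?_
  rw [map_sum, ofAdd_sum]
  refine Subgroup.prod_mem _ fun j _ => ?_
  rw [superdiag_single]
  split_ifs with hij
  · have hab : i ≠ j := Fin.ne_of_val_ne (by omega)
    exact ⟨_, htv i j hab hij.symm _, superdiagHom_tvUnit hℓ hab hij.symm _⟩
  · exact one_mem _

lemma UTd_le_of_UTd_succ_le {S : Subgroup (Matrix (Fin n) (Fin n) (ZMod p))ˣ} (hℓ : 1 ≤ ℓ)
    (hsucc : UTd n p (ℓ + 1) ≤ S)
    (htv : ∀ (a b : Fin n) (hab : a ≠ b), (a : ℕ) + ℓ = b → ∀ c, tvUnit n p a b hab c ∈ S) :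
    UTd n p ℓ ≤ S := by
  intro x hx
  obtain ⟨s, hsS, hs⟩ := superdiagHom_mem_map_subgroupOf hℓ htv ⟨x, hx⟩
  have hker : superdiagHom hℓ (s⁻¹ * ⟨x, hx⟩) = 1 := by
    rw [map_mul, map_inv, hs, inv_mul_cancel]
  have := mul_mem hsS (Subgroup.mem_subgroupOf.2
    (hsucc (mem_UTd_succ_of_superdiagHom_eq_one hℓ hker)))
  rwa [mul_inv_cancel_left, Subgroup.mem_subgroupOf] at this

lemma UTd_le_of_tvUnit_mem {S : Subgroup (Matrix (Fin n) (Fin n) (ZMod p))ˣ} (hℓ : 1 ≤ ℓ)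
    (htv : ∀ (a b : Fin n) (hab : a ≠ b), (a : ℕ) + ℓ ≤ b → ∀ c, tvUnit n p a b hab c ∈ S) :
    UTd n p ℓ ≤ S := by
  obtain ⟨k, hk⟩ : ∃ k, n ≤ ℓ + k := ⟨n, by omega⟩
  induction k generalizing ℓ with
  | zero => rw [UTd_eq_bot hℓ (by omega)]; exact bot_le
  | succ k ih =>
    exact UTd_le_of_UTd_succ_le hℓ
      (ih (by omega) (fun a b hab h => htv a b hab (by omega)) (by omega))
      (fun a b hab h => htv a b hab h.le)

end Unitriangular

theorem commutator_UTd_general (p n r s : ℕ) [Fact p.Prime] (hr : 1 ≤ r) (hs : 1 ≤ s) :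
    ⁅UTd n p r, UTd n p s⁆ = UTd n p (r + s) :=
  le_antisymm (commutator_UTd_le hr hs)
    (UTd_le_of_tvUnit_mem (by omega) fun _ _ hab h c => tvUnit_mem_commutator_UTd hab hr hs h c)

theorem commutator_UTd (p n r s : ℕ) [Fact p.Prime] (hn : 2 ≤ n) (hr : 1 ≤ r) (hs : 1 ≤ s) :
    ⁅UTd n p r, UTd n p s⁆ = UTd n p (r + s) :=
  commutator_UTd_general p n r s hr hs
end

section
/- Let p be a prime and n ≥ 3. There exists a group homomorphism θ : UT_{n−1}(F_p) → UT_n(F_p) such that θ(t_{1,j}(α)) = t_{1,j+1}(α) for all 2 ≤ j ≤ n−1 and α ∈ F_p, and θ(t_{i,j}(α)) = t_{i+1,j+1}(α) for all 2 ≤ i < j ≤ n−1 and α ∈ F_p. In particular θ(t_{1,n−1}(1)) = t_{1,n}(1), so θ maps the center of UT_{n−1}(F_p) isomorphically onto the center of UT_n(F_p). -/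
open Matrix

/-! The homomorphism inserts into `A` a new row and column of the identity matrix right after
the first index; up to a permutation of the indices it is `A ↦ diag(A, 1)`. Hence it is a
multiplicative embedding, it keeps matrices upper unitriangular because inserting an index is
monotone, and it sends `t_{ij}` to the transvection at the shifted indices. The centre of
`UT_m(F_p)` consists of the corner transvections `t_{1,m}(c)`: commuting with `E_{a,a+1}` kills
column `a` off the diagonal, and commuting with `E_{1,b}` kills row `b`. As the new index lies
strictly between the first and the last one, the corner of `UT_{n-1}` goes to the corner of
`UT_n`. -/

namespace Matrix

variable {R : Type*} [Semiring R] {m : ℕ} (k : Fin (m + 1))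

def succAboveSumEquiv : Fin (m + 1) ≃ Fin m ⊕ Unit :=
  (finSuccEquiv' k).trans (Equiv.optionEquivSumPUnit (Fin m))

@[simp] lemma succAboveSumEquiv_self : succAboveSumEquiv k k = Sum.inr () := by
  simp [succAboveSumEquiv]

@[simp] lemma succAboveSumEquiv_succAbove (a : Fin m) :
    succAboveSumEquiv k (k.succAbove a) = Sum.inl a := by
  simp [succAboveSumEquiv]

def insertIdentityAt : Matrix (Fin m) (Fin m) R →* Matrix (Fin (m + 1)) (Fin (m + 1)) R where
  toFun A := (fromBlocks A 0 0 1).submatrix (succAboveSumEquiv k) (succAboveSumEquiv k)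
  map_one' := by simp [fromBlocks_one, submatrix_one_equiv]
  map_mul' A B := by simp [submatrix_mul_equiv, fromBlocks_multiply]

variable {k}

@[simp] lemma insertIdentityAt_apply_succAbove (A : Matrix (Fin m) (Fin m) R) (a b : Fin m) :
    insertIdentityAt k A (k.succAbove a) (k.succAbove b) = A a b := by
  simp [insertIdentityAt]

@[simp] lemma insertIdentityAt_apply_self (A : Matrix (Fin m) (Fin m) R) :
    insertIdentityAt k A k k = 1 := by
  simp [insertIdentityAt]

@[simp] lemma insertIdentityAt_apply_self_succAbove (A : Matrix (Fin m) (Fin m) R) (b : Fin m) :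
    insertIdentityAt k A k (k.succAbove b) = 0 := by
  simp [insertIdentityAt]

@[simp] lemma insertIdentityAt_apply_succAbove_self (A : Matrix (Fin m) (Fin m) R) (a : Fin m) :
    insertIdentityAt k A (k.succAbove a) k = 0 := by
  simp [insertIdentityAt]

lemma insertIdentityAt_injective :
    Function.Injective (insertIdentityAt k : Matrix (Fin m) (Fin m) R → _) := by
  intro A B h
  ext a b
  simpa using congr_fun₂ h (k.succAbove a) (k.succAbove b)

lemma insertIdentityAt_transvection {S : Type*} [CommRing S] (a b : Fin m) (c : S) :
    insertIdentityAt k (transvection a b c) = transvection (k.succAbove a) (k.succAbove b) c := by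
  ext x y
  cases x using Fin.succAboveCases k <;> cases y using Fin.succAboveCases k <;>
    simp [transvection, one_apply, single_apply, eq_comm]

end Matrix

namespace UT

variable {m p : ℕ} [Fact p.Prime]

def toMatrix (g : UT m p) : Matrix (Fin m) (Fin m) (ZMod p) :=
  (g : (Matrix (Fin m) (Fin m) (ZMod p))ˣ)

lemma toMatrix_injective : Function.Injective (toMatrix (m := m) (p := p)) :=
  fun _ _ h => Subtype.ext (Units.ext h)

lemma toMatrix_tv (n i j : ℕ) (h1 : 1 ≤ i) (hij : i < j) (hjn : j ≤ n) (c : ZMod p) :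
    toMatrix (tv n p i j h1 hij hjn c) = transvection ⟨i - 1, by omega⟩ ⟨j - 1, by omega⟩ c :=
  rfl

lemma insertIdentityAt_mem (k : Fin (m + 1)) {x : (Matrix (Fin m) (Fin m) (ZMod p))ˣ}
    (hx : x ∈ UT m p) : Units.map (insertIdentityAt k) x ∈ UT (m + 1) p := by
  obtain ⟨hdiag, hlower⟩ := hx
  refine ⟨fun i => ?_, fun i j hji => ?_⟩
  · cases i using Fin.succAboveCases k <;> simp [hdiag]
  · cases i using Fin.succAboveCases k <;> cases j using Fin.succAboveCases k
    · exact absurd hji (lt_irrefl _)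
    · simp
    · simp
    · simpa using hlower _ _ (by simpa [← Fin.lt_def] using hji)

def insertHom (k : Fin (m + 1)) : UT m p →* UT (m + 1) p :=
  ((Units.map (insertIdentityAt k)).comp (UT m p).subtype).codRestrict _
    fun x => insertIdentityAt_mem k x.2

lemma toMatrix_insertHom (k : Fin (m + 1)) (x : UT m p) :
    toMatrix (insertHom k x) = insertIdentityAt k (toMatrix x) :=
  rfl

lemma insertHom_injective (k : Fin (m + 1)) : Function.Injective (insertHom (p := p) k) :=
  fun x y h => toMatrix_injective <| insertIdentityAt_injective <| by
    simpa only [toMatrix_insertHom] using congrArg toMatrix h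

/-- `tv` is indexed from `1` and `k` from `0`, so the index `i` moves to `i + 1` exactly when
`i > k`. -/
lemma insertHom_tv (k : Fin (m + 1)) (i j : ℕ) (h1 : 1 ≤ i) (hij : i < j) (hjm : j ≤ m)
    (i' j' : ℕ) (h1' : 1 ≤ i') (hij' : i' < j') (hj' : j' ≤ m + 1)
    (hi : i' = if i ≤ k then i else i + 1) (hj : j' = if j ≤ k then j else j + 1) (c : ZMod p) :
    insertHom k (tv m p i j h1 hij hjm c) = tv (m + 1) p i' j' h1' hij' hj' c := by
  apply toMatrix_injective
  rw [toMatrix_insertHom, toMatrix_tv, toMatrix_tv, insertIdentityAt_transvection]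
  subst hi hj
  congr <;> ext <;> simp only [Fin.succAbove, Fin.lt_def, Fin.val_castSucc] <;> split_ifs <;>
    simp <;> omega

lemma commute_single_of_mem_center {g : UT m p} (hg : g ∈ Subgroup.center (UT m p))
    {a b : Fin m} (hab : a < b) : Commute (single a b (1 : ZMod p)) (toMatrix g) := by
  have h : Commute (transvection a b (1 : ZMod p)) (toMatrix g) :=
    congrArg toMatrix (Subgroup.mem_center_iff.mp hg ⟨_, tvUnit_mem_UT m p a b hab 1⟩)
  simpa [transvection] using h.sub_left (Commute.one_left _)

lemma toMatrix_apply_eq_zero_of_mem_center {g : UT m p} (hg : g ∈ Subgroup.center (UT m p))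
    {x y : Fin m} (hxy : x < y) (hxy' : (x : ℕ) ≠ 0 ∨ (y : ℕ) ≠ m - 1) :
    toMatrix g x y = 0 := by
  rcases hxy' with hx | hy
  · exact row_eq_zero_of_commute_single
      (commute_single_of_mem_center hg (show ⟨0, by omega⟩ < x by simp [Fin.lt_def]; omega))
      hxy.ne'
  · exact col_eq_zero_of_commute_single
      (commute_single_of_mem_center hg (show y < ⟨y + 1, by omega⟩ by simp [Fin.lt_def]))
      hxy.ne

lemma eq_tv_of_mem_center (hm : 2 ≤ m) {g : UT m p} (hg : g ∈ Subgroup.center (UT m p)) :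
    g = tv m p 1 m le_rfl (by omega) le_rfl (toMatrix g ⟨0, by omega⟩ ⟨m - 1, by omega⟩) := by
  obtain ⟨hdiag, hlower⟩ := g.2
  apply toMatrix_injective
  ext x y
  simp only [toMatrix_tv, transvection, Matrix.add_apply, one_apply, single_apply, Fin.ext_iff]
  rcases lt_trichotomy x y with hxy | rfl | hyx
  · have hxy' := Fin.lt_def.1 hxy
    by_cases hcorner : (x : ℕ) = 0 ∧ (y : ℕ) = m - 1
    · rw [if_neg (by omega), if_pos (by omega), zero_add]
      exact congr_arg₂ (toMatrix g) (Fin.ext hcorner.1) (Fin.ext hcorner.2)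
    · rw [toMatrix_apply_eq_zero_of_mem_center hg hxy (by omega), if_neg (by omega),
        if_neg (by omega), add_zero]
  · rw [if_pos rfl, if_neg (by omega), add_zero]
    exact hdiag x
  · have hyx' := Fin.lt_def.1 hyx
    rw [if_neg (by omega), if_neg (by omega), add_zero]
    exact hlower x y hyx

lemma mem_center_iff (hm : 2 ≤ m) {g : UT m p} :
    g ∈ Subgroup.center (UT m p) ↔ ∃ c, tv m p 1 m le_rfl (by omega) le_rfl c = g := by
  refine ⟨fun hg => ⟨_, (eq_tv_of_mem_center hm hg).symm⟩, ?_⟩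
  rintro ⟨c, rfl⟩
  exact Subgroup.mem_center_iff.mpr fun h => (tv_corner_central m p hm c h).eq

lemma map_center_insertHom {k : Fin (m + 1)} (hk₀ : k ≠ 0) (hkm : k ≠ Fin.last m) :
    (Subgroup.center (UT m p)).map (insertHom k) = Subgroup.center (UT (m + 1) p) := by
  have hk₀' : 1 ≤ (k : ℕ) := Fin.pos_iff_ne_zero.2 hk₀
  have hkm' : (k : ℕ) < m := Fin.val_lt_last hkm
  have hcorner (c : ZMod p) : insertHom k (tv m p 1 m le_rfl (by omega) le_rfl c) =
      tv (m + 1) p 1 (m + 1) le_rfl (by omega) le_rfl c :=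
    insertHom_tv k _ _ _ _ _ _ _ _ _ _ (by rw [if_pos hk₀']) (by rw [if_neg (by omega)]) c
  ext g
  simp only [Subgroup.mem_map, mem_center_iff (by omega : 2 ≤ m),
    mem_center_iff (by omega : 2 ≤ m + 1)]
  constructor
  · rintro ⟨_, ⟨c, rfl⟩, rfl⟩
    exact ⟨c, (hcorner c).symm⟩
  · rintro ⟨c, rfl⟩
    exact ⟨_, ⟨c, rfl⟩, hcorner c⟩

end UT

theorem exists_shift_hom (p n : ℕ) [Fact p.Prime] (hn : 3 ≤ n) :
    ∃ θ : ↥(UT (n - 1) p) →* ↥(UT n p),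
      (∀ (j : ℕ) (h2 : 2 ≤ j) (hj : j ≤ n - 1) (α : ZMod p),
        θ (tv (n - 1) p 1 j (le_refl 1) (by omega) hj α)
          = tv n p 1 (j + 1) (le_refl 1) (by omega) (by omega) α) ∧
      (∀ (i j : ℕ) (h2 : 2 ≤ i) (hij : i < j) (hj : j ≤ n - 1) (α : ZMod p),
        θ (tv (n - 1) p i j (by omega) hij hj α)
          = tv n p (i + 1) (j + 1) (by omega) (by omega) (by omega) α) ∧
      θ (tv (n - 1) p 1 (n - 1) (le_refl 1) (by omega) (le_refl (n - 1)) 1)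
        = tv n p 1 n (le_refl 1) (by omega) (le_refl n) 1 ∧
      Subgroup.map θ (Subgroup.center ↥(UT (n - 1) p)) = Subgroup.center ↥(UT n p) ∧
      Set.InjOn θ (Subgroup.center ↥(UT (n - 1) p)) := by
  -- `m + 1 - 1` reduces to `m`, so `UT (m + 1 - 1) p` is `UT m p` by definition.
  obtain ⟨m, rfl⟩ : ∃ m, n = m + 1 := ⟨n - 1, by omega⟩
  have hk : ((1 : Fin (m + 1)) : ℕ) = 1 := by rw [Fin.val_one', Nat.one_mod_eq_one]; omega
  refine ⟨UT.insertHom 1, fun j _ hj α => ?_, fun i j _ hij hj α => ?_, ?_,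
    UT.map_center_insertHom (by rw [Ne, Fin.ext_iff, hk, Fin.val_zero]; omega)
      (by rw [Ne, Fin.ext_iff, hk, Fin.val_last]; omega),
    (UT.insertHom_injective 1).injOn⟩
  · exact UT.insertHom_tv 1 _ _ _ _ hj _ _ _ _ _ (by rw [hk]; split_ifs <;> omega)
      (by rw [hk]; split_ifs <;> omega) α
  · exact UT.insertHom_tv 1 _ _ _ hij hj _ _ _ _ _ (by rw [hk]; split_ifs <;> omega)
      (by rw [hk]; split_ifs <;> omega) α
  · exact UT.insertHom_tv 1 _ _ _ _ le_rfl _ _ _ _ _ (by rw [hk]; split_ifs <;> omega)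
      (by rw [hk]; split_ifs <;> omega) 1
end

section
/- Let p be a prime and 2 ≤ k ≤ n. There exists a group homomorphism θ : UT_k(F_p) → UT_n(F_p) such that θ(t_{1,k}(λ)) = t_{1,n}(λ) for all λ ∈ F_p; in particular, θ restricts to an isomorphism from the center of UT_k(F_p) onto the center of UT_n(F_p). -/
open Matrix

/-!
Place a unitriangular `k × k` matrix in the rows and columns `1, …, k - 1, n` of an `n × n`
matrix and fill the rest with the identity. Up to relabelling indices this is the block
embedding `A ↦ diag(A, 1)`, hence multiplicative; it preserves unitriangularity because the
chosen positions are increasing, and it sends `t_{1,k}(λ)` to `t_{1,n}(λ)`. The centre of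
`UT_m(F_p)` is exactly `{t_{1,m}(λ)}`: a matrix commuting with every `1 + E_{ij}`, `i < j`, has
row `j` and column `i` zero off the diagonal, which leaves only the corner entry free.
-/

open Function

namespace Matrix

variable {ι κ ν R : Type*} [Fintype ι] [Fintype κ] [Fintype ν]
  [DecidableEq ι] [DecidableEq κ] [DecidableEq ν]

section Semiring

variable [Semiring R]

def extendByOne (e : ι ⊕ κ ≃ ν) : Matrix ι ι R →* Matrix ν ν R where
  toFun A := reindex e e (fromBlocks A 0 0 1)
  map_one' := by rw [fromBlocks_one, reindex_apply, submatrix_one_equiv]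
  map_mul' A B := by
    rw [← coe_reindexRingEquiv, ← map_mul]
    simp [fromBlocks_multiply]

lemma extendByOne_apply_self (e : ι ⊕ κ ≃ ν) {A : Matrix ι ι R} (hA : ∀ i, A i i = 1)
    (x : ν) : extendByOne e A x x = 1 := by
  obtain ⟨s | s, rfl⟩ := e.surjective x <;> simp [extendByOne, hA]

lemma IsUpperTriangular.extendByOne [LinearOrder ι] [Preorder ν] {e : ι ⊕ κ ≃ ν}
    (he : StrictMono (e ∘ Sum.inl)) {A : Matrix ι ι R} (hA : A.IsUpperTriangular) :
    (extendByOne e A).IsUpperTriangular := by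
  show (reindex e e _).BlockTriangular id
  rw [blockTriangular_reindex_iff]
  rintro (i | i) (j | j) h <;> simp only [fromBlocks_apply₁₁, fromBlocks_apply₁₂,
    fromBlocks_apply₂₁, fromBlocks_apply₂₂, zero_apply]
  · exact hA (he.lt_iff_lt.1 h)
  · exact one_apply_ne (by rintro rfl; exact lt_irrefl _ h)

end Semiring

lemma extendByOne_transvection [CommRing R] (e : ι ⊕ κ ≃ ν) (i j : ι) (c : R) :
    extendByOne e (transvection i j c) = transvection (e (.inl i)) (e (.inl j)) c := by
  ext x y
  obtain ⟨s, rfl⟩ := e.surjective x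
  obtain ⟨t, rfl⟩ := e.surjective y
  rcases s with s | s <;> rcases t with t | t <;>
    simp [extendByOne, transvection, one_apply, single_apply]

lemma eq_transvection_of_commute_single [CommRing R] [LinearOrder ι] {a b : ι}
    (ha : IsBot a) (hb : IsTop b) (hab : a ≠ b) {G : Matrix ι ι R} (hd : ∀ i, G i i = 1)
    (hG : G.IsUpperTriangular) (hc : ∀ i j, i < j → Commute (single i j 1) G) :
    G = transvection a b (G a b) := by
  ext x y
  rcases lt_trichotomy x y with hxy | rfl | hxy
  · by_cases hcorner : x = a ∧ y = b
    · obtain ⟨rfl, rfl⟩ := hcorner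
      simp [transvection, one_apply_ne hab]
    · have hzero : G x y = 0 := by
        rcases not_and_or.1 hcorner with hxa | hyb
        · exact row_eq_zero_of_commute_single (hc a x (lt_of_le_of_ne (ha x) (Ne.symm hxa)))
            hxy.ne'
        · exact col_eq_zero_of_commute_single (hc y b (lt_of_le_of_ne (hb y) hyb)) hxy.ne
      simp only [transvection, add_apply, one_apply_ne hxy.ne, single_apply, hzero, zero_add]
      rw [if_neg fun h => hcorner ⟨h.1.symm, h.2.symm⟩]
  · simp only [transvection, add_apply, one_apply_eq, hd, single_apply]
    rw [if_neg fun h => hab (h.1.trans h.2.symm), add_zero]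
  · simp only [transvection, add_apply, one_apply_ne hxy.ne', single_apply, hG hxy, zero_add]
    rw [if_neg fun h => (h.1 ▸ h.2 ▸ hxy).not_ge (ha b)]

end Matrix

open scoped Classical in
noncomputable def Function.Injective.sumComplRangeEquiv {ι ν : Type*} {f : ι → ν}
    (hf : Injective f) : ι ⊕ ↥(Set.range f)ᶜ ≃ ν :=
  ((Equiv.ofInjective f hf).sumCongr (Equiv.refl _)).trans (Equiv.Set.sumCompl _)

@[simp]
lemma Function.Injective.sumComplRangeEquiv_inl {ι ν : Type*} {f : ι → ν} (hf : Injective f)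
    (i : ι) : hf.sumComplRangeEquiv (.inl i) = f i := by
  simp [Function.Injective.sumComplRangeEquiv]

section Unitriangular

variable {p : ℕ} [Fact p.Prime]

lemma mem_UT_iff {n : ℕ} {x : (Matrix (Fin n) (Fin n) (ZMod p))ˣ} :
    x ∈ UT n p ↔ (∀ i, (x : Matrix (Fin n) (Fin n) (ZMod p)) i i = 1) ∧
      (x : Matrix (Fin n) (Fin n) (ZMod p)).IsUpperTriangular :=
  Iff.rfl

lemma tv_corner_injective {m : ℕ} (hm : 2 ≤ m) :
    Injective (tv m p 1 m (le_refl 1) (by omega) (le_refl m)) := by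
  intro c d h
  have := congrArg (fun g : UT m p =>
    (g.1 : Matrix (Fin m) (Fin m) (ZMod p)) ⟨0, by omega⟩ ⟨m - 1, by omega⟩) h
  simpa [tv, tvUnit, transvection, one_apply_ne, Fin.ext_iff, show m - 1 ≠ 0 by omega] using this

lemma center_UT_eq_range {m : ℕ} (hm : 2 ≤ m) :
    (Subgroup.center (UT m p) : Set (UT m p)) =
      Set.range (tv m p 1 m (le_refl 1) (by omega) (le_refl m)) := by
  ext g
  refine ⟨fun hg => ?_, ?_⟩
  · obtain ⟨hd, hG⟩ := mem_UT_iff.1 g.2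
    have hc : ∀ i j : Fin m, i < j →
        Commute (single i j 1) (g.1 : Matrix (Fin m) (Fin m) (ZMod p)) := by
      intro i j hij
      have hcomm : Commute (transvection i j 1) (g.1 : Matrix (Fin m) (Fin m) (ZMod p)) :=
        congrArg (fun z : UT m p => (z.1 : Matrix (Fin m) (Fin m) (ZMod p)))
          (Subgroup.mem_center_iff.1 hg ⟨tvUnit m p i j hij.ne 1, tvUnit_mem_UT m p i j hij 1⟩)
      simpa [transvection] using hcomm.sub_left (Commute.one_left _)
    have hbot : IsBot (⟨0, by omega⟩ : Fin m) := fun i => Nat.zero_le i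
    have htop : IsTop (⟨m - 1, by omega⟩ : Fin m) := fun i => Nat.le_sub_one_of_lt i.isLt
    have hne : (⟨0, by omega⟩ : Fin m) ≠ ⟨m - 1, by omega⟩ :=
      Fin.ne_of_val_ne (by dsimp only; omega)
    exact ⟨_, Subtype.ext (Units.ext
      (eq_transvection_of_commute_single hbot htop hne hd hG hc).symm)⟩
  · rintro ⟨c, rfl⟩
    exact Subgroup.mem_center_iff.2 fun g => (tv_corner_central m p hm c g).eq

noncomputable def UT.mapOfStrictMono {k n : ℕ} {f : Fin k → Fin n} (hf : StrictMono f) :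
    UT k p →* UT n p :=
  ((Units.map (extendByOne hf.injective.sumComplRangeEquiv)).comp (UT k p).subtype).codRestrict
    (UT n p) fun g => by
      obtain ⟨hd, hG⟩ := mem_UT_iff.1 g.2
      exact ⟨extendByOne_apply_self _ hd, hG.extendByOne (by simpa [comp_def] using hf)⟩

lemma UT.mapOfStrictMono_tv {k n : ℕ} (hk : 2 ≤ k) (hn : 2 ≤ n) {f : Fin k → Fin n}
    (hf : StrictMono f) (h0 : f ⟨0, by omega⟩ = ⟨0, by omega⟩)
    (hlast : f ⟨k - 1, by omega⟩ = ⟨n - 1, by omega⟩) (c : ZMod p) :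
    UT.mapOfStrictMono hf (tv k p 1 k (le_refl 1) (by omega) (le_refl k) c) =
      tv n p 1 n (le_refl 1) (by omega) (le_refl n) c := by
  refine Subtype.ext (Units.ext ?_)
  show extendByOne _ (transvection _ _ c) = transvection _ _ c
  rw [extendByOne_transvection, Injective.sumComplRangeEquiv_inl,
    Injective.sumComplRangeEquiv_inl]
  exact congrArg₂ (transvection · · c) h0 hlast

end Unitriangular

def cornerIndex {k n : ℕ} (hkn : k ≤ n) (i : Fin k) : Fin n :=
  if (i : ℕ) + 1 = k then ⟨n - 1, by have := i.isLt; omega⟩ else Fin.castLE hkn i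

lemma cornerIndex_strictMono {k n : ℕ} (hkn : k ≤ n) : StrictMono (cornerIndex hkn) := by
  intro i j hij
  simp only [cornerIndex, Fin.lt_def] at hij ⊢
  split_ifs <;> simp only [Fin.val_castLE] <;> omega

theorem exists_corner_hom (p k n : ℕ) [Fact p.Prime] (hk : 2 ≤ k) (hkn : k ≤ n) :
    ∃ θ : ↥(UT k p) →* ↥(UT n p),
      (∀ c : ZMod p,
        θ (tv k p 1 k (le_refl 1) (by omega) (le_refl k) c)
          = tv n p 1 n (le_refl 1) (by omega) (le_refl n) c) ∧
      Subgroup.map θ (Subgroup.center ↥(UT k p)) = Subgroup.center ↥(UT n p) ∧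
      Set.InjOn θ (Subgroup.center ↥(UT k p)) := by
  have hn : 2 ≤ n := hk.trans hkn
  have hθ := UT.mapOfStrictMono_tv (p := p) hk hn (cornerIndex_strictMono hkn)
    (by rw [cornerIndex, if_neg (by dsimp only; omega)]; rfl)
    (by rw [cornerIndex, if_pos (by dsimp only; omega)])
  refine ⟨UT.mapOfStrictMono (cornerIndex_strictMono hkn), hθ, ?_, ?_⟩
  · apply SetLike.coe_injective
    rw [Subgroup.coe_map, center_UT_eq_range hk, center_UT_eq_range hn, ← Set.range_comp]
    exact congrArg Set.range (funext hθ)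
  · rw [center_UT_eq_range hk]
    rintro _ ⟨c, rfl⟩ _ ⟨d, rfl⟩ h
    rw [hθ, hθ] at h
    rw [tv_corner_injective hn h]
end
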